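/- Let G be a graph, let H be a finite graph, and let K be a positive integer. If the power graph G^K contains H as a 3-fat minor, then G contains H as a K-fat minor. -/

import Mathlib

open SimpleGraph

/-- The distance between two vertex sets `X` and `Y` in a graph `G` is at least `K`
(measured with the extended graph distance, so unreachable pairs are at infinite distance). -/
def SimpleGraph.SetDistGE {V : Type*} (G : SimpleGraph V) (X Y : Set V) (K : ℕ) : Prop :=
  ∀ x ∈ X, ∀ y ∈ Y, (K : ℕ∞) ≤ G.edist x y

/-- `B, P` form a `K`-fat minor model of `H` in `G`: branch sets `B v` and edge paths `P e`
induce connected subgraphs, incident pairs intersect, and all other pairs of sets in the model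
are at distance at least `K`. -/
def SimpleGraph.IsFatMinorModel {V W : Type*} (G : SimpleGraph V) (H : SimpleGraph W) (K : ℕ)
    (B : W → Set V) (P : H.edgeSet → Set V) : Prop :=
  (∀ w, (G.induce (B w)).Connected) ∧
  (∀ e, (G.induce (P e)).Connected) ∧
  (∀ (w : W) (e : H.edgeSet), w ∈ (e : Sym2 W) → (B w ∩ P e).Nonempty) ∧
  (∀ w w' : W, w ≠ w' → G.SetDistGE (B w) (B w') K) ∧
  (∀ e e' : H.edgeSet, e ≠ e' → G.SetDistGE (P e) (P e') K) ∧
  (∀ (w : W) (e : H.edgeSet), w ∉ (e : Sym2 W) → G.SetDistGE (B w) (P e) K)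

/-- `G` contains `H` as a `K`-fat minor. -/
def SimpleGraph.HasFatMinor {V W : Type*} (G : SimpleGraph V) (H : SimpleGraph W) (K : ℕ) : Prop :=
  ∃ B P, G.IsFatMinorModel H K B P

/-- The `K`-th power of a graph `G`: distinct vertices are adjacent iff their distance
in `G` is at most `K`. -/
def SimpleGraph.powerGraph {V : Type*} (G : SimpleGraph V) (K : ℕ) : SimpleGraph V where
  Adj u v := u ≠ v ∧ G.edist u v ≤ K
  symm := ⟨fun u v ⟨h, hd⟩ => ⟨h.symm, by rwa [SimpleGraph.edist_comm]⟩⟩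
  loopless := ⟨fun u ⟨h, _⟩ => h rfl⟩

/-!
Replace each set `S` of the `3`-fat model in `G^K` by its walk hull: the vertices on `G`-walks of
length at most `K` between vertices of `S`. An edge of `G^K[S]` is realized by such a walk, so the
hull induces a connected subgraph of `G`, and every hull vertex lies within `K / 2` of `S`. Two hull
vertices at `G`-distance less than `K` would thus put the original sets within `G`-distance `2K`,
that is, within two steps of `G^K`.
-/

namespace SimpleGraph

variable {V : Type*} {G : SimpleGraph V} {K : ℕ} {u v : V}

lemma exists_walk_length_le_of_edist_le {n : ℕ} (h : G.edist u v ≤ n) :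
    ∃ p : G.Walk u v, p.length ≤ n := by
  obtain ⟨p, hp⟩ := exists_walk_of_edist_ne_top (ne_top_of_le_ne_top (ENat.natCast_ne_top n) h)
  exact ⟨p, by rw [← hp] at h; exact_mod_cast h⟩

lemma Reachable.lift {α β : Type*} {G : SimpleGraph α} {G' : SimpleGraph β} (f : α → β)
    (h : ∀ a b, G.Adj a b → G'.Reachable (f a) (f b)) {a b : α} (hab : G.Reachable a b) :
    G'.Reachable (f a) (f b) := by
  rw [reachable_iff_reflTransGen] at hab ⊢
  exact Relation.ReflTransGen.lift' f (fun a b hadj => (reachable_iff_reflTransGen _ _).1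
    (h a b hadj)) _ _ hab

lemma edist_powerGraph_le_one (h : G.edist u v ≤ K) : (G.powerGraph K).edist u v ≤ 1 := by
  rw [edist_le_one_iff_adj_or_eq]
  by_cases huv : u = v
  · exact Or.inr huv
  · exact Or.inl ⟨huv, h⟩

lemma Walk.edist_powerGraph_le (n : ℕ) (p : G.Walk u v) (hp : p.length ≤ n * K) :
    (G.powerGraph K).edist u v ≤ n := by
  induction n generalizing u with
  | zero =>
    obtain rfl := Walk.eq_of_length_eq_zero (Nat.le_zero.mp (by simpa using hp))
    simp
  | succ n ih =>
    have hfirst : (G.powerGraph K).edist u (p.getVert K) ≤ 1 :=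
      edist_powerGraph_le_one <| (p.take K).edist_le.trans (by simp)
    have hrest : (G.powerGraph K).edist (p.getVert K) v ≤ n :=
      ih (p.drop K) (by rw [Walk.drop_length]; rw [Nat.succ_mul] at hp; omega)
    calc (G.powerGraph K).edist u v
        ≤ (G.powerGraph K).edist u (p.getVert K) + (G.powerGraph K).edist (p.getVert K) v :=
          SimpleGraph.edist_triangle
      _ ≤ 1 + n := add_le_add hfirst hrest
      _ = (n + 1 : ℕ) := by push_cast; ring

lemma edist_powerGraph_le {n : ℕ} (h : G.edist u v ≤ (n * K : ℕ)) :
    (G.powerGraph K).edist u v ≤ n := by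
  obtain ⟨p, hp⟩ := exists_walk_length_le_of_edist_le h
  exact p.edist_powerGraph_le n hp

def walkHull (G : SimpleGraph V) (K : ℕ) (S : Set V) : Set V :=
  {x | ∃ u ∈ S, ∃ v ∈ S, ∃ p : G.Walk u v, p.length ≤ K ∧ x ∈ p.support}

variable {S : Set V}

lemma subset_walkHull : S ⊆ G.walkHull K S :=
  fun x hx => ⟨x, hx, x, hx, Walk.nil, by simp⟩

lemma Walk.support_subset_walkHull (hu : u ∈ S) (hv : v ∈ S) (p : G.Walk u v)
    (hp : p.length ≤ K) : {x | x ∈ p.support} ⊆ G.walkHull K S :=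
  fun _ hx => ⟨u, hu, v, hv, p, hp, hx⟩

lemma exists_edist_le_half_of_mem_walkHull {x : V} (hx : x ∈ G.walkHull K S) :
    ∃ s ∈ S, G.edist s x ≤ (K / 2 : ℕ) := by
  obtain ⟨u, hu, v, hv, p, hp, hx⟩ := hx
  obtain ⟨q, r, rfl⟩ := Walk.mem_support_iff_exists_append.mp hx
  rw [Walk.length_append] at hp
  by_cases hq : q.length ≤ K / 2
  · exact ⟨u, hu, q.edist_le.trans (by exact_mod_cast hq)⟩
  · refine ⟨v, hv, ?_⟩
    rw [edist_comm]
    exact r.edist_le.trans (by exact_mod_cast (by omega : r.length ≤ K / 2))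

lemma Walk.reachable_induce_walkHull (hu : u ∈ S) (hv : v ∈ S) (p : G.Walk u v)
    (hp : p.length ≤ K) {x y : V} (hx : x ∈ p.support) (hy : y ∈ p.support) :
    (G.induce (G.walkHull K S)).Reachable ⟨x, ⟨u, hu, v, hv, p, hp, hx⟩⟩
      ⟨y, ⟨u, hu, v, hv, p, hp, hy⟩⟩ :=
  (p.connected_induce_support.preconnected ⟨x, hx⟩ ⟨y, hy⟩).map
    (induceHomOfLE G (p.support_subset_walkHull hu hv hp)).toHom

lemma connected_induce_walkHull (hS : ((G.powerGraph K).induce S).Connected) :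
    (G.induce (G.walkHull K S)).Connected := by
  have reach_base : ∀ x (hx : x ∈ G.walkHull K S), ∃ s, ∃ hs : s ∈ S,
      (G.induce (G.walkHull K S)).Reachable ⟨x, hx⟩ ⟨s, subset_walkHull hs⟩ := by
    rintro x ⟨u, hu, v, hv, p, hp, hx⟩
    exact ⟨u, hu, p.reachable_induce_walkHull hu hv hp hx p.start_mem_support⟩
  have reach_of_base : ∀ a b : S, ((G.powerGraph K).induce S).Reachable a b →
      (G.induce (G.walkHull K S)).Reachable ⟨a, subset_walkHull a.2⟩ ⟨b, subset_walkHull b.2⟩ :=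
    fun a b => Reachable.lift (fun a : S => (⟨a, subset_walkHull a.2⟩ : G.walkHull K S))
      fun a b hab => by
        obtain ⟨p, hp⟩ := exists_walk_length_le_of_edist_le (comap_adj.mp hab).2
        exact p.reachable_induce_walkHull a.2 b.2 hp p.start_mem_support p.end_mem_support
  obtain ⟨s, hs⟩ := hS.nonempty
  refine (connected_iff _).2 ⟨fun ⟨x, hx⟩ ⟨y, hy⟩ => ?_, ⟨⟨s, subset_walkHull hs⟩⟩⟩
  obtain ⟨a, ha, hxa⟩ := reach_base x hx
  obtain ⟨b, hb, hyb⟩ := reach_base y hy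
  exact hxa.trans ((reach_of_base ⟨a, ha⟩ ⟨b, hb⟩ (hS.preconnected _ _)).trans hyb.symm)

lemma setDistGE_walkHull {X Y : Set V} (hXY : (G.powerGraph K).SetDistGE X Y 3) :
    G.SetDistGE (G.walkHull K X) (G.walkHull K Y) K := by
  intro x hx y hy
  by_contra! hxy
  obtain ⟨s, hs, hsx⟩ := exists_edist_le_half_of_mem_walkHull hx
  obtain ⟨t, ht, hty⟩ := exists_edist_le_half_of_mem_walkHull hy
  rw [edist_comm] at hty
  have hst : G.edist s t ≤ (2 * K : ℕ) :=
    calc G.edist s t ≤ G.edist s x + G.edist x y + G.edist y t :=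
          SimpleGraph.edist_triangle.trans (add_le_add_left SimpleGraph.edist_triangle _)
      _ ≤ (K / 2 : ℕ) + K + (K / 2 : ℕ) := by gcongr
      _ ≤ (2 * K : ℕ) := by norm_cast; omega
  have := (hXY s hs t ht).trans (edist_powerGraph_le hst)
  norm_num at this

lemma IsFatMinorModel.walkHull {W : Type*} {H : SimpleGraph W} {B : W → Set V}
    {P : H.edgeSet → Set V} (h : (G.powerGraph K).IsFatMinorModel H 3 B P) :
    G.IsFatMinorModel H K (fun w => G.walkHull K (B w)) (fun e => G.walkHull K (P e)) := by
  obtain ⟨hB, hP, hmeet, hBB, hPP, hBP⟩ := h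
  exact ⟨fun w => connected_induce_walkHull (hB w), fun e => connected_induce_walkHull (hP e),
    fun w e hwe => (hmeet w e hwe).mono (Set.inter_subset_inter subset_walkHull subset_walkHull),
    fun w w' hne => setDistGE_walkHull (hBB w w' hne),
    fun e e' hne => setDistGE_walkHull (hPP e e' hne),
    fun w e hwe => setDistGE_walkHull (hBP w e hwe)⟩

end SimpleGraph

theorem hasFatMinor_of_powerGraph_hasFatMinor_general {V W : Type*}
    (G : SimpleGraph V) (H : SimpleGraph W) (K : ℕ)
    (h : (G.powerGraph K).HasFatMinor H 3) :
    G.HasFatMinor H K := by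
  obtain ⟨B, P, hmodel⟩ := h
  exact ⟨_, _, hmodel.walkHull⟩

/-- If the power graph `G^K` contains a finite graph `H` as a `3`-fat minor, then `G`
contains `H` as a `K`-fat minor. -/
theorem hasFatMinor_of_powerGraph_hasFatMinor {V W : Type*} [Fintype W]
    (G : SimpleGraph V) (H : SimpleGraph W) (K : ℕ) (hK : 0 < K)
    (h : (G.powerGraph K).HasFatMinor H 3) :
    G.HasFatMinor H K :=
  hasFatMinor_of_powerGraph_hasFatMinor_general G H K h
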